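/- The intersection ⋂_{i=1}^{n} L[M_i] is empty if and only if the DFAs 𝒜 and ℬ have the same set of reset words, i.e. Syn(𝒜) = Syn(ℬ). -/
import Mathlib


/-- The transition function of a DFA extended to words (read left to right). -/
def deltaStar {Q A : Type} (δ : Q → A → Q) (q : Q) (w : List A) : Q :=
  w.foldl δ q

/-- `w` is a reset word for the DFA with transition function `δ`. -/
def IsReset {Q A : Type} (δ : Q → A → Q) (w : List A) : Prop :=
  ∀ q q' : Q, deltaStar δ q w = deltaStar δ q' w

/-- The set of reset words of a DFA. -/
def Syn {Q A : Type} (δ : Q → A → Q) : Set (List A) :=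
  {w | IsReset δ w}

/-- The alphabet Δ = Σ ∪ {x,y,z}: `Sum.inl a` is a letter of Σ, and
`Sum.inr 0`, `Sum.inr 1`, `Sum.inr 2` are the new letters x, y, z. -/
abbrev Alph (σ : Type) : Type := σ ⊕ Fin 3

def xL {σ : Type} : Alph σ := Sum.inr 0
def yL {σ : Type} : Alph σ := Sum.inr 1
def zL {σ : Type} : Alph σ := Sum.inr 2

/-- The state set Q of the DFA 𝒜: the disjoint union of the state sets `Qst i`
of the DFAs `M i`, together with two new states: `Sum.inr false` is the sink `s`
and `Sum.inr true` is the state `h`. -/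
abbrev StA {n : ℕ} (Qst : Fin n → Type) : Type := (Σ i, Qst i) ⊕ Bool

def sA {n : ℕ} {Qst : Fin n → Type} : StA Qst := Sum.inr false
def hA {n : ℕ} {Qst : Fin n → Type} : StA Qst := Sum.inr true

/-- The transition function φ of the DFA 𝒜. -/
def phi {n : ℕ} {σ : Type} {Qst : Fin n → Type}
    (δi : ∀ i, Qst i → σ → Qst i) (qinit : ∀ i, Qst i)
    (Fi : ∀ i, Set (Qst i)) [∀ i, DecidablePred (· ∈ Fi i)] :
    StA Qst → Alph σ → StA Qst
  | Sum.inl ⟨i, q⟩, Sum.inl a => Sum.inl ⟨i, δi i q a⟩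
  | Sum.inl ⟨i, q⟩, Sum.inr k =>
      if k = 0 then Sum.inl ⟨i, qinit i⟩          -- φ(q, x) = qᵢ
      else if k = 1 then sA                        -- φ(q, y) = s
      else if q ∈ Fi i then sA else hA             -- φ(q, z) = s on Fᵢ, h off Fᵢ
  | Sum.inr _, _ => sA                             -- φ(s,·) = φ(h,·) = s

/-- The language accepted by the DFA `M i = ⟨Qst i, σ, δi i, qinit i, Fi i⟩`. -/
def LM {n : ℕ} {σ : Type} {Qst : Fin n → Type}
    (δi : ∀ i, Qst i → σ → Qst i) (qinit : ∀ i, Qst i)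
    (Fi : ∀ i, Set (Qst i)) (i : Fin n) : Set (List σ) :=
  {w | deltaStar (δi i) (qinit i) w ∈ Fi i}

/-- The 3-state DFA ℬ: states `0 = p₁`, `1 = p₂`, `2 = s` (the sink). -/
def tauB {σ : Type} (p : Fin 3) (a : Alph σ) : Fin 3 :=
  if p = 0 then
    match a with
    | Sum.inl _ => 0                                -- τ(p₁,a) = p₁ for a ∈ Σ
    | Sum.inr k => if k = 0 then 0                  -- τ(p₁,x) = p₁
                   else if k = 1 then 2             -- τ(p₁,y) = s
                   else 1                            -- τ(p₁,z) = p₂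
  else 2                                             -- τ(p₂,·) = τ(s,·) = s

section Aux

variable {n : ℕ} {σ : Type} {Qst : Fin n → Type}
  (δi : ∀ i, Qst i → σ → Qst i) (qinit : ∀ i, Qst i)
  (Fi : ∀ i, Set (Qst i)) [∀ i, DecidablePred (· ∈ Fi i)]

lemma deltaStar_nil {Q A : Type} (δ : Q → A → Q) (q : Q) :
    deltaStar δ q [] = q := rfl

lemma deltaStar_cons {Q A : Type} (δ : Q → A → Q) (q : Q) (a : A) (w : List A) :
    deltaStar δ q (a :: w) = deltaStar δ (δ q a) w := rfl

lemma deltaStar_append {Q A : Type} (δ : Q → A → Q) (q : Q) (u v : List A) :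
    deltaStar δ q (u ++ v) = deltaStar δ (deltaStar δ q u) v :=
  List.foldl_append ..

lemma tau_sink (w : List (Alph σ)) : deltaStar (tauB (σ := σ)) 2 w = 2 := by
  induction w with
  | nil => rfl
  | cons a w ih => rw [deltaStar_cons]; exact ih

lemma tau_one (w : List (Alph σ)) (h : w ≠ []) : deltaStar (tauB (σ := σ)) 1 w = 2 := by
  cases w with
  | nil => exact absurd rfl h
  | cons a w => rw [deltaStar_cons]; exact tau_sink w

lemma phi_sink (w : List (Alph σ)) :
    deltaStar (phi δi qinit Fi) sA w = sA := by
  induction w with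
  | nil => rfl
  | cons a w ih => rw [deltaStar_cons]; exact ih

lemma phi_inr (b : Bool) (w : List (Alph σ)) (h : w ≠ []) :
    deltaStar (phi δi qinit Fi) (Sum.inr b) w = sA := by
  cases w with
  | nil => exact absurd rfl h
  | cons a w => rw [deltaStar_cons]; exact phi_sink δi qinit Fi w

lemma synB_iff (w : List (Alph σ)) :
    IsReset (tauB (σ := σ)) w ↔ w ≠ [] ∧ deltaStar (tauB (σ := σ)) 0 w = 2 := by
  constructor
  · intro h
    constructor
    · rintro rfl
      have := h 0 1
      simp [deltaStar_nil] at this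
    · rcases w.eq_nil_or_concat with rfl | ⟨u, a, rfl⟩
      · have := h 0 1; simp [deltaStar_nil] at this
      · rw [h 0 2, tau_sink]
  · rintro ⟨hne, h0⟩ q q'
    have hq : ∀ p : Fin 3, deltaStar (tauB (σ := σ)) p w = 2 := by
      intro p
      have : p = 0 ∨ p = 1 ∨ p = 2 := by omega
      rcases this with rfl | rfl | rfl
      · exact h0
      · exact tau_one w hne
      · exact tau_sink w
    rw [hq q, hq q']

lemma synA_iff (w : List (Alph σ)) :
    IsReset (phi δi qinit Fi) w ↔
      w ≠ [] ∧ ∀ i (q : Qst i), deltaStar (phi δi qinit Fi) (Sum.inl ⟨i, q⟩) w = sA := by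
  constructor
  · intro h
    constructor
    · rintro rfl
      have := h sA hA
      simp [deltaStar_nil, sA, hA] at this
    · intro i q
      rw [h (Sum.inl ⟨i, q⟩) sA, phi_sink]
  · rintro ⟨hne, h0⟩ q q'
    have hq : ∀ p : StA Qst, deltaStar (phi δi qinit Fi) p w = sA := by
      rintro (⟨i, q⟩ | b)
      · exact h0 i q
      · exact phi_inr δi qinit Fi b w hne
    rw [hq q, hq q']

/-- Any word sending p₁ to the sink in ℬ synchronizes all `Qst` states of 𝒜 to `sA`. -/
lemma mono (w : List (Alph σ)) (hw : deltaStar (tauB (σ := σ)) 0 w = 2) :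
    ∀ i (q : Qst i), deltaStar (phi δi qinit Fi) (Sum.inl ⟨i, q⟩) w = sA := by
  induction w with
  | nil => simp [deltaStar_nil] at hw
  | cons a w ih =>
    rw [deltaStar_cons] at hw
    intro i q
    rw [deltaStar_cons]
    cases a with
    | inl b => exact ih hw i (δi i q b)
    | inr k =>
      have hk : k = 0 ∨ k = 1 ∨ k = 2 := by omega
      rcases hk with rfl | rfl | rfl
      · exact ih hw i (qinit i)
      · show deltaStar (phi δi qinit Fi) sA w = sA
        exact phi_sink δi qinit Fi w
      · -- z : tauB 0 z = 1, so w ≠ []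
        have hne : w ≠ [] := by
          rintro rfl
          have h1 : (1 : Fin 3) = 2 := hw
          exact absurd h1 (by decide)
        show deltaStar (phi δi qinit Fi)
            (if q ∈ Fi i then sA else hA) w = sA
        split
        · exact phi_sink δi qinit Fi w
        · exact phi_inr δi qinit Fi true w hne

/-- Words keeping ℬ in p₁ keep each 𝒜-component inside its own `Qst i`, ending
uniformly at a state reached by a common σ-word. -/
lemma keyE (u : List (Alph σ)) (hu : deltaStar (tauB (σ := σ)) 0 u = 0)
    (g : ∀ i, Qst i) :
    ∃ h : ∀ i, Qst i,
      (∀ i, deltaStar (phi δi qinit Fi) (Sum.inl ⟨i, g i⟩) u = Sum.inl ⟨i, h i⟩) ∧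
      ((∃ v : List σ, ∀ i, h i = deltaStar (δi i) (qinit i) v) ∨
       (∃ v : List σ, ∀ i, h i = deltaStar (δi i) (g i) v)) := by
  induction u generalizing g with
  | nil => exact ⟨g, fun i => rfl, Or.inr ⟨[], fun i => rfl⟩⟩
  | cons a u ih =>
    rw [deltaStar_cons] at hu
    cases a with
    | inl b =>
      obtain ⟨h, h1, h2⟩ := ih hu (fun i => δi i (g i) b)
      refine ⟨h, fun i => h1 i, ?_⟩
      rcases h2 with ⟨v, hv⟩ | ⟨v, hv⟩
      · exact Or.inl ⟨v, hv⟩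
      · exact Or.inr ⟨b :: v, fun i => hv i⟩
    | inr k =>
      have hk : k = 0 ∨ k = 1 ∨ k = 2 := by omega
      rcases hk with rfl | rfl | rfl
      · obtain ⟨h, h1, h2⟩ := ih hu (fun i => qinit i)
        refine ⟨h, fun i => h1 i, ?_⟩
        rcases h2 with ⟨v, hv⟩ | ⟨v, hv⟩
        · exact Or.inl ⟨v, hv⟩
        · exact Or.inl ⟨v, hv⟩
      · have h1 : (2 : Fin 3) = 0 := (tau_sink u).symm.trans hu
        exact absurd h1 (by decide)
      · rcases Classical.em (u = []) with rfl | hne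
        · have h1 : (1 : Fin 3) = 0 := hu
          exact absurd h1 (by decide)
        · have h1 : (2 : Fin 3) = 0 := (tau_one u hne).symm.trans hu
          exact absurd h1 (by decide)

lemma tau_zero_decomp (w : List (Alph σ)) (hw : deltaStar (tauB (σ := σ)) 0 w = 1) :
    ∃ u, w = u ++ [zL] ∧ deltaStar (tauB (σ := σ)) 0 u = 0 := by
  induction w using List.reverseRecOn with
  | nil =>
    have h1 : (0 : Fin 3) = 1 := hw
    exact absurd h1 (by decide)
  | append_singleton u a _ =>
    rw [deltaStar_append, deltaStar_cons, deltaStar_nil] at hw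
    have hp3 : deltaStar (tauB (σ := σ)) 0 u = 0 ∨ deltaStar (tauB (σ := σ)) 0 u = 1 ∨
        deltaStar (tauB (σ := σ)) 0 u = 2 := by omega
    rcases hp3 with h0 | h0 | h0 <;> rw [h0] at hw
    · cases a with
      | inl b =>
        have h1 : (0 : Fin 3) = 1 := hw
        exact absurd h1 (by decide)
      | inr k =>
        have hk : k = 0 ∨ k = 1 ∨ k = 2 := by omega
        rcases hk with rfl | rfl | rfl
        · have h1 : (0 : Fin 3) = 1 := hw
          exact absurd h1 (by decide)
        · have h1 : (2 : Fin 3) = 1 := hw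
          exact absurd h1 (by decide)
        · exact ⟨u, rfl, h0⟩
    · have h1 : (2 : Fin 3) = 1 := hw
      exact absurd h1 (by decide)
    · have h1 : (2 : Fin 3) = 1 := hw
      exact absurd h1 (by decide)

lemma phi_map_inl (v : List σ) (i : Fin n) (q : Qst i) :
    deltaStar (phi δi qinit Fi) (Sum.inl ⟨i, q⟩) (v.map Sum.inl) =
      Sum.inl ⟨i, deltaStar (δi i) q v⟩ := by
  induction v generalizing q with
  | nil => rfl
  | cons b v ih =>
    rw [List.map_cons, deltaStar_cons, deltaStar_cons]
    exact ih (δi i q b)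

lemma tau_map_inl (v : List σ) :
    deltaStar (tauB (σ := σ)) 0 (v.map Sum.inl) = 0 := by
  induction v with
  | nil => rfl
  | cons b v ih => rw [List.map_cons, deltaStar_cons]; exact ih

end Aux

/-- ⋂ᵢ L[Mᵢ] = ∅ iff Syn(𝒜) = Syn(ℬ). -/
theorem inter_empty_iff_syn_A_eq_syn_B
    (n : ℕ) (hn : 0 < n) (σ : Type) [Fintype σ]
    (Qst : Fin n → Type) [∀ i, Fintype (Qst i)]
    (δi : ∀ i, Qst i → σ → Qst i) (qinit : ∀ i, Qst i)
    (Fi : ∀ i, Set (Qst i)) [∀ i, DecidablePred (· ∈ Fi i)]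
    (hno : ∀ i (q : Qst i) (a : σ), δi i q a ≠ qinit i)
    (hqF : ∀ i, qinit i ∉ Fi i) :
    (⋂ i, LM δi qinit Fi i) = ∅ ↔
      Syn (phi δi qinit Fi) = Syn (tauB (σ := σ)) := by
  constructor
  · intro hempty
    ext w
    simp only [Syn, Set.mem_setOf_eq]
    rw [synA_iff, synB_iff]
    constructor
    · rintro ⟨hne, hall⟩
      refine ⟨hne, ?_⟩
      by_contra h2
      have h3 : deltaStar (tauB (σ := σ)) 0 w = 0 ∨
          deltaStar (tauB (σ := σ)) 0 w = 1 := by omega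
      rcases h3 with h3 | h3
      · -- no y/z letters: component states stay inside
        obtain ⟨i⟩ := Fin.pos_iff_nonempty.mp hn
        obtain ⟨h, h1, -⟩ := keyE δi qinit Fi w h3 (fun i => qinit i)
        have := (h1 i).symm.trans (hall i (qinit i))
        simp [sA] at this
      · obtain ⟨u, rfl, hu⟩ := tau_zero_decomp w h3
        obtain ⟨h, h1, h2⟩ := keyE δi qinit Fi u hu (fun i => qinit i)
        have hv : ∃ v : List σ, ∀ i, h i = deltaStar (δi i) (qinit i) v := by
          rcases h2 with hv | hv <;> exact hv
        obtain ⟨v, hv⟩ := hv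
        have hF : ∀ i, h i ∈ Fi i := by
          intro i
          have := hall i (qinit i)
          rw [deltaStar_append, h1 i] at this
          rw [deltaStar_cons, deltaStar_nil] at this
          by_contra hF
          rw [show phi δi qinit Fi (Sum.inl ⟨i, h i⟩) zL =
              (if h i ∈ Fi i then sA else hA) from rfl, if_neg hF] at this
          simp [sA, hA] at this
        have : v ∈ ⋂ i, LM δi qinit Fi i := by
          rw [Set.mem_iInter]
          intro i
          show deltaStar (δi i) (qinit i) v ∈ Fi i
          rw [← hv i]; exact hF i
        rw [hempty] at this
        exact this
    · rintro ⟨hne, h2⟩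
      exact ⟨hne, mono δi qinit Fi w h2⟩
  · intro heq
    by_contra hne
    obtain ⟨v, hv⟩ := Set.nonempty_iff_ne_empty.mpr hne
    rw [Set.mem_iInter] at hv
    set w : List (Alph σ) := xL :: (v.map Sum.inl ++ [zL]) with hwdef
    have hwA : w ∈ Syn (phi δi qinit Fi) := by
      rw [Syn, Set.mem_setOf_eq, synA_iff]
      refine ⟨by simp [hwdef], ?_⟩
      intro i q
      rw [hwdef, deltaStar_cons]
      rw [show phi δi qinit Fi (Sum.inl ⟨i, q⟩) xL = Sum.inl ⟨i, qinit i⟩ from rfl]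
      rw [deltaStar_append, phi_map_inl]
      rw [deltaStar_cons, deltaStar_nil]
      rw [show phi δi qinit Fi (Sum.inl ⟨i, deltaStar (δi i) (qinit i) v⟩) zL =
          (if deltaStar (δi i) (qinit i) v ∈ Fi i then sA else hA) from rfl]
      exact if_pos (hv i)
    have hwB : w ∉ Syn (tauB (σ := σ)) := by
      rw [Syn, Set.mem_setOf_eq, synB_iff]
      rintro ⟨-, h2⟩
      rw [hwdef, deltaStar_cons,
        show tauB (σ := σ) 0 xL = 0 from rfl,
        deltaStar_append, tau_map_inl, deltaStar_cons, deltaStar_nil,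
        show tauB (σ := σ) 0 zL = 1 from rfl] at h2
      exact absurd h2 (by decide)
    rw [heq] at hwA
    exact hwB hwA
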